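/- Let η ∈ D_r with k(η) ≥ 1 and suppose e^{2a(n)} = c n^{−d/k(η)} for a fixed constant c > 0, with b a fixed real. Then the total variation distance between the distributions of X_n(η̊) and X_n(η) under μ_{a(n),b} satisfies d_TV(L(X_n(η̊)), L(X_n(η))) = O(n^{−d/k(η)}). -/

import Mathlib

open scoped ENNReal BigOperators
open Filter

namespace Ising

noncomputable section

/-- The `L_p` norm (`1 ≤ p ≤ ∞`) of an integer vector, via the `PiLp` norm on `ℝ^d`. -/
def lpNorm (p : ℝ≥0∞) [Fact (1 ≤ p)] {d : ℕ} (z : Fin d → ℤ) : ℝ :=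
  ‖(WithLp.equiv p (Fin d → ℝ)).symm (fun i => (z i : ℝ))‖

lemma lpNorm_neg (p : ℝ≥0∞) [Fact (1 ≤ p)] {d : ℕ} (z : Fin d → ℤ) :
    lpNorm p (fun i => -(z i)) = lpNorm p z := by
  unfold lpNorm
  have h : ((WithLp.equiv p (Fin d → ℝ)).symm (fun i => ((-(z i) : ℤ) : ℝ)))
      = -((WithLp.equiv p (Fin d → ℝ)).symm fun i => ((z i : ℤ) : ℝ)) := by
    have : (fun i => ((-(z i) : ℤ) : ℝ)) = -(fun i => ((z i : ℤ) : ℝ)) := by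
      funext i; simp
    rw [this]; rfl
  rw [h, norm_neg]

/-- Vertex set of the `d`-dimensional lattice torus of size `n`:
`{0, …, n-1}^d` with componentwise arithmetic modulo `n`. -/
abbrev Vtx (d n : ℕ) := Fin d → ZMod n

/-- Configurations: a spin (`true` = `+1`, `false` = `-1`) at each vertex. -/
abbrev Conf (d n : ℕ) := Vtx d n → Bool

/-- The spin value (`±1`) of a Boolean. -/
def spin (s : Bool) : ℝ := if s then 1 else -1

/-- The lattice torus `G_n`: distinct vertices `x, y` are adjacent iff `y - x`
(componentwise modulo `n`) admits an integer representative `z` with `‖z‖_p ≤ ρ`. -/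
def torus (d ρ : ℕ) (p : ℝ≥0∞) [Fact (1 ≤ p)] (n : ℕ) : SimpleGraph (Vtx d n) where
  Adj x y := x ≠ y ∧ ∃ z : Fin d → ℤ,
    (∀ i, ((z i : ZMod n) = y i - x i)) ∧ lpNorm p z ≤ (ρ : ℝ)
  symm := by
    constructor
    rintro x y ⟨hxy, z, hz, hn⟩
    refine ⟨hxy.symm, fun i => -(z i), fun i => ?_, by rw [lpNorm_neg]; exact hn⟩
    push_cast
    rw [hz i]; ring
  loopless := ⟨fun x h => h.1 rfl⟩

/-- The corresponding (infinite) lattice graph on `ℤ^d`, used as a reference to define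
local configurations: distinct `x, y` are adjacent iff `‖y - x‖_p ≤ ρ`. -/
def latticeZ (d ρ : ℕ) (p : ℝ≥0∞) [Fact (1 ≤ p)] : SimpleGraph (Fin d → ℤ) where
  Adj x y := x ≠ y ∧ lpNorm p (fun i => y i - x i) ≤ (ρ : ℝ)
  symm := by
    constructor
    rintro x y ⟨hxy, hn⟩
    refine ⟨hxy.symm, ?_⟩
    have h : (fun i => x i - y i) = (fun i => -(y i - x i)) := by funext i; ring
    rw [h, lpNorm_neg]; exact hn
  loopless := ⟨fun x h => h.1 rfl⟩

/-- The ball `B(x,r)` of center `x` and radius `r` for the graph distance. -/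
def gball {V : Type*} (G : SimpleGraph V) (x : V) (r : ℕ) : Set V :=
  {y | G.Reachable x y ∧ G.dist x y ≤ r}

/-- The reference ball `B(0,r)` (in `ℤ^d`). -/
def refBall (d ρ : ℕ) (p : ℝ≥0∞) [Fact (1 ≤ p)] (r : ℕ) : Set (Fin d → ℤ) :=
  gball (latticeZ d ρ p) 0 r

/-- A local configuration of radius `r`: an element of `D_r = {-1,+1}^{B(0,r)}`. -/
abbrev LocalConfig (d ρ : ℕ) (p : ℝ≥0∞) [Fact (1 ≤ p)] (r : ℕ) :=
  ↥(refBall d ρ p r) → Bool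

/-- `k(η)`: the number of positive vertices of a local configuration `η`. -/
def kOf (d ρ : ℕ) (p : ℝ≥0∞) [Fact (1 ≤ p)] (r : ℕ) (η : LocalConfig d ρ p r) : ℕ :=
  Set.ncard {v : ↥(refBall d ρ p r) | η v = true}

/-- The common degree of the vertices (number of neighbors of `0` in the lattice). -/
def degZ (d ρ : ℕ) (p : ℝ≥0∞) [Fact (1 ≤ p)] : ℕ :=
  Set.ncard {z : Fin d → ℤ | (latticeZ d ρ p).Adj 0 z}

/-- The perimeter `γ(η) = V·k(η) - 2·#{edges with both endpoints positive}`; the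
number of ordered adjacent pairs of positive vertices is twice the number of such edges. -/
def perim (d ρ : ℕ) (p : ℝ≥0∞) [Fact (1 ≤ p)] (r : ℕ) (η : LocalConfig d ρ p r) : ℕ :=
  degZ d ρ p * kOf d ρ p r η -
    Set.ncard {q : ↥(refBall d ρ p r) × ↥(refBall d ρ p r) |
      (latticeZ d ρ p).Adj q.1.1 q.2.1 ∧ η q.1 = true ∧ η q.2 = true}

/-- `η` is clean if every vertex at graph distance exactly `r` from `0` is negative. -/
def Clean (d ρ : ℕ) (p : ℝ≥0∞) [Fact (1 ≤ p)] (r : ℕ) (η : LocalConfig d ρ p r) : Prop :=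
  ∀ v : ↥(refBall d ρ p r), (latticeZ d ρ p).dist 0 v.1 = r → η v = false

/-- The translate `η_x` of `η` occurs at `x` in the configuration `σ`. -/
def occursAt (d ρ : ℕ) (p : ℝ≥0∞) [Fact (1 ≤ p)] (r n : ℕ) (η : LocalConfig d ρ p r)
    (x : Vtx d n) (σ : Conf d n) : Prop :=
  ∀ v : ↥(refBall d ρ p r), σ (x + fun i => ((v.1 i : ZMod n))) = η v

/-- The indicator `I_x^η` (as a real number). -/
def occInd (d ρ : ℕ) (p : ℝ≥0∞) [Fact (1 ≤ p)] (r n : ℕ) (η : LocalConfig d ρ p r)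
    (x : Vtx d n) (σ : Conf d n) : ℝ := by
  classical exact if occursAt d ρ p r n η x σ then 1 else 0

/-- `X_n(η) = Σ_x I_x^η`: the number of copies of `η` in `G_n`. -/
def Xcount (d ρ : ℕ) (p : ℝ≥0∞) [Fact (1 ≤ p)] (r n : ℕ) (η : LocalConfig d ρ p r)
    (σ : Conf d n) : ℕ :=
  Set.ncard {x : Vtx d n | occursAt d ρ p r n η x σ}

/-- The interaction term `Σ_{{x,y} ∈ E_n} σ(x)σ(y)`. -/
def pairSum (d ρ : ℕ) (p : ℝ≥0∞) [Fact (1 ≤ p)] (n : ℕ) (σ : Conf d n) : ℝ :=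
  ∑' e : ↥(torus d ρ p n).edgeSet,
    Sym2.lift ⟨fun x y => spin (σ x) * spin (σ y), fun _ _ => mul_comm _ _⟩
      (e : Sym2 (Vtx d n))

/-- The Hamiltonian `a Σ_x σ(x) + b Σ_{{x,y} ∈ E_n} σ(x)σ(y)`. -/
def hamiltonian (d ρ : ℕ) (p : ℝ≥0∞) [Fact (1 ≤ p)] (n : ℕ) (a b : ℝ) (σ : Conf d n) : ℝ :=
  a * (∑' x : Vtx d n, spin (σ x)) + b * pairSum d ρ p n σ

/-- The (unnormalized) Gibbs weight of a configuration. -/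
def weight (d ρ : ℕ) (p : ℝ≥0∞) [Fact (1 ≤ p)] (n : ℕ) (a b : ℝ) (σ : Conf d n) : ℝ :=
  Real.exp (hamiltonian d ρ p n a b σ)

/-- The partition function `Z_{a,b}`. -/
def partZ (d ρ : ℕ) (p : ℝ≥0∞) [Fact (1 ≤ p)] (n : ℕ) (a b : ℝ) : ℝ :=
  ∑' σ : Conf d n, weight d ρ p n a b σ

/-- The Ising (Gibbs) probability `μ_{a,b}(A)` of an event `A ⊆ X_n`. -/
def prob (d ρ : ℕ) (p : ℝ≥0∞) [Fact (1 ≤ p)] (n : ℕ) (a b : ℝ) (A : Set (Conf d n)) : ℝ :=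
  (∑' σ : ↥A, weight d ρ p n a b (σ : Conf d n)) / partZ d ρ p n a b

/-- The expectation `E_{a,b}[f]`. -/
def expect (d ρ : ℕ) (p : ℝ≥0∞) [Fact (1 ≤ p)] (n : ℕ) (a b : ℝ) (f : Conf d n → ℝ) : ℝ :=
  (∑' σ : Conf d n, weight d ρ p n a b σ * f σ) / partZ d ρ p n a b

/-- The variance `Var_{a,b}[f]`. -/
def varE (d ρ : ℕ) (p : ℝ≥0∞) [Fact (1 ≤ p)] (n : ℕ) (a b : ℝ) (f : Conf d n → ℝ) : ℝ :=
  expect d ρ p n a b (fun σ => (f σ - expect d ρ p n a b f) ^ 2)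

/-- The event `{I_x^η = 1}`. -/
def event (d ρ : ℕ) (p : ℝ≥0∞) [Fact (1 ≤ p)] (r n : ℕ) (η : LocalConfig d ρ p r)
    (x : Vtx d n) : Set (Conf d n) :=
  {σ | occursAt d ρ p r n η x σ}

/-- The event that a configuration agrees with `σ₀` on `W`. -/
def agreeOn (d n : ℕ) (W : Set (Vtx d n)) (σ₀ : Conf d n) : Set (Conf d n) :=
  {τ | ∀ x ∈ W, τ x = σ₀ x}

/-- The conditional probability `μ_{a,b}(A | σ₀ on W)`. -/
def condProb (d ρ : ℕ) (p : ℝ≥0∞) [Fact (1 ≤ p)] (n : ℕ) (a b : ℝ) (A : Set (Conf d n))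
    (W : Set (Vtx d n)) (σ₀ : Conf d n) : ℝ :=
  prob d ρ p n a b (A ∩ agreeOn d n W σ₀) / prob d ρ p n a b (agreeOn d n W σ₀)

/-- The exterior boundary `δV` of a set of vertices of the torus. -/
def boundary (d ρ : ℕ) (p : ℝ≥0∞) [Fact (1 ≤ p)] (n : ℕ) (V : Set (Vtx d n)) :
    Set (Vtx d n) :=
  {y | y ∉ V ∧ ∃ x ∈ V, (torus d ρ p n).Adj x y}

/-- The ball `B(x,R)` in the torus. -/
def tball (d ρ : ℕ) (p : ℝ≥0∞) [Fact (1 ≤ p)] (n : ℕ) (x : Vtx d n) (R : ℕ) :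
    Set (Vtx d n) :=
  gball (torus d ρ p n) x R

/-- The distribution (probability mass function on `ℕ`) of an integer-valued observable. -/
def lawOf (d ρ : ℕ) (p : ℝ≥0∞) [Fact (1 ≤ p)] (n : ℕ) (a b : ℝ) (X : Conf d n → ℕ) :
    ℕ → ℝ :=
  fun m => prob d ρ p n a b {σ | X σ = m}

/-- The distribution on `ℕ` of a real-valued (integer-valued in fact) observable. -/
def lawR (d ρ : ℕ) (p : ℝ≥0∞) [Fact (1 ≤ p)] (n : ℕ) (a b : ℝ) (X : Conf d n → ℝ) :
    ℕ → ℝ :=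
  fun m => prob d ρ p n a b {σ | X σ = (m : ℝ)}

/-- The Poisson distribution with parameter `θ`, as a pmf on `ℕ`. -/
def poissonPMF (θ : ℝ) : ℕ → ℝ :=
  fun m => Real.exp (-θ) * θ ^ m / (Nat.factorial m : ℝ)

/-- Total variation distance between two distributions on `ℕ`:
`d_TV(μ,ν) = sup_A |μ(A) - ν(A)|`. -/
def dTV (f g : ℕ → ℝ) : ℝ :=
  ⨆ A : Set ℕ, |(∑' m : ↥A, f (m : ℕ)) - ∑' m : ↥A, g (m : ℕ)|

/-- The clean extension `η̊ ∈ D_{r+1}` of `η ∈ D_r`: it agrees with `η` on `B(0,r)` and is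
negative at every vertex at distance exactly `r+1` from `0`. -/
def ringExt (d ρ : ℕ) (p : ℝ≥0∞) [Fact (1 ≤ p)] (r : ℕ) (η : LocalConfig d ρ p r) :
    LocalConfig d ρ p (r + 1) := by
  classical exact fun v => if h : v.1 ∈ refBall d ρ p r then η ⟨v.1, h⟩ else false

/-- `D_r(η) = {η' ∈ D_r : V_+(η') ⊇ V_+(η)}`. -/
def Dfam (d ρ : ℕ) (p : ℝ≥0∞) [Fact (1 ≤ p)] (r : ℕ) (η : LocalConfig d ρ p r) :
    Set (LocalConfig d ρ p r) :=
  {η' | ∀ v, η v = true → η' v = true}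

/-- `Ī_x^η = Σ_{η' ∈ D_r(η)} I_x^{η'}`. -/
def barInd (d ρ : ℕ) (p : ℝ≥0∞) [Fact (1 ≤ p)] (r n : ℕ) (η : LocalConfig d ρ p r)
    (x : Vtx d n) (σ : Conf d n) : ℝ :=
  ∑' η' : ↥(Dfam d ρ p r η), occInd d ρ p r n (η' : LocalConfig d ρ p r) x σ

/-- `X̄_n(η) = Σ_x Ī_x^η`. -/
def Xbar (d ρ : ℕ) (p : ℝ≥0∞) [Fact (1 ≤ p)] (r n : ℕ) (η : LocalConfig d ρ p r)
    (σ : Conf d n) : ℝ :=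
  ∑' x : Vtx d n, barInd d ρ p r n η x σ

/-- The closed neighbourhood `B̄ = B ∪ δB` of a torus ball. -/
def cball (d ρ : ℕ) (p : ℝ≥0∞) [Fact (1 ≤ p)] (n : ℕ) (x : Vtx d n) (r : ℕ) :
    Set (Vtx d n) :=
  tball d ρ p n x r ∪ boundary d ρ p n (tball d ρ p n x r)

/-- One step of the connectivity relation between the balls of radius `r` centered at the
entries of a tuple: `B̄(x_i) ∩ B(x_j) ≠ ∅`. -/
def stepRel (d ρ : ℕ) (p : ℝ≥0∞) [Fact (1 ≤ p)] (n r : ℕ) {l : ℕ} (x : Fin l → Vtx d n)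
    (i j : Fin l) : Prop :=
  (cball d ρ p n (x i) r ∩ tball d ρ p n (x j) r).Nonempty

/-- The number of equivalence classes, for the connectivity relation, of the set of balls
`{B(x_1,r), …, B(x_l,r)}`. -/
def numClasses (d ρ : ℕ) (p : ℝ≥0∞) [Fact (1 ≤ p)] (n r : ℕ) {l : ℕ}
    (x : Fin l → Vtx d n) : ℕ :=
  Set.ncard (Set.range fun i : Fin l =>
    {j : Fin l | Relation.EqvGen (stepRel d ρ p n r x) i j})

/-- `C_l(s)`: the set of `l`-tuples of vertices whose set of balls of radius `r` is composed
of exactly `s` equivalence classes for the connectivity relation. -/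
def tupleClass (d ρ : ℕ) (p : ℝ≥0∞) [Fact (1 ≤ p)] (n r l s : ℕ) :
    Set (Fin l → Vtx d n) :=
  {x | numClasses d ρ p n r x = s}

/-!
Every copy of `η̊` at `x` is a copy of `η` at `x`, and a copy of `η` at `x` fails to extend to
one of `η̊` only if some site of the annulus `B(0, r + 1) \ B(0, r)`, translated by `x`, is
positive. So `X_n(η̊) ≠ X_n(η)` forces, for one of `n^d · #annulus` pairs `(x, v)`,
`k(η) + 1` distinct positive sites (the ball of radius `r + 1` embeds in the torus). Turning
them negative is injective on that event and multiplies the Gibbs weight by at least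
`e^{-(2a + 2|b|(2ρ+1)^d)}` per site, `(2ρ+1)^d` bounding the degree. Hence each event has
probability `O(e^{2a(k+1)}) = O(n^{-d(k+1)/k})`, and the coupling bound
`d_TV(L(X), L(Y)) ≤ μ(X ≠ Y)` gives `O(n^d · n^{-d(k+1)/k}) = O(n^{-d/k})`.
-/

open MeasureTheory

section Geometry

variable {d ρ : ℕ} {p : ℝ≥0∞} [Fact (1 ≤ p)]

lemma abs_le_lpNorm (z : Fin d → ℤ) (i : Fin d) : |(z i : ℝ)| ≤ lpNorm p z :=
  PiLp.norm_apply_le ((WithLp.equiv p (Fin d → ℝ)).symm fun j => (z j : ℝ)) i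

lemma abs_le_of_lpNorm_le {z : Fin d → ℤ} (hz : lpNorm p z ≤ ρ) (i : Fin d) : |z i| ≤ ρ := by
  exact_mod_cast (abs_le_lpNorm z i).trans hz

lemma abs_sub_le_of_walk {u v : Fin d → ℤ} (w : (latticeZ d ρ p).Walk u v) (i : Fin d) :
    |v i - u i| ≤ ρ * w.length := by
  induction w with
  | nil => simp
  | @cons u u' v h w ih =>
    have h1 := abs_le_of_lpNorm_le h.2 i
    have h2 := abs_sub_le (v i) (u' i) (u i)
    rw [SimpleGraph.Walk.length_cons]
    push_cast
    linarith

lemma abs_le_of_mem_refBall {r : ℕ} {v : Fin d → ℤ} (hv : v ∈ refBall d ρ p r)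
    (i : Fin d) : |v i| ≤ ρ * r := by
  obtain ⟨w, hw⟩ := hv.1.exists_walk_length_eq_dist
  have hwalk := abs_sub_le_of_walk w i
  rw [hw, Pi.zero_apply, sub_zero] at hwalk
  exact hwalk.trans (by gcongr; exact_mod_cast hv.2)

variable (d ρ p) in
lemma refBall_finite (r : ℕ) : (refBall d ρ p r).Finite :=
  (Set.Finite.pi fun _ : Fin d => Set.finite_Icc (-(ρ * r : ℤ)) (ρ * r)).subset
    fun _ hv => Set.mem_univ_pi.2 fun i => abs_le.1 (abs_le_of_mem_refBall hv i)

lemma refBall_subset_refBall_succ (r : ℕ) : refBall d ρ p r ⊆ refBall d ρ p (r + 1) :=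
  fun _ hv => ⟨hv.1, hv.2.trans r.le_succ⟩

def shift {n : ℕ} (x : Vtx d n) (v : Fin d → ℤ) : Vtx d n := x + fun i => (v i : ZMod n)

lemma shift_injOn_refBall {n r : ℕ} (hn : 2 * ρ * r < n) (x : Vtx d n) :
    Set.InjOn (shift x) (refBall d ρ p r) := by
  intro u hu u' hu' huu'
  funext i
  have hdvd : (n : ℤ) ∣ u i - u' i := by
    rw [← ZMod.intCast_zmod_eq_zero_iff_dvd]
    have := congrFun huu' i
    simp only [shift, Pi.add_apply, add_right_inj] at this
    push_cast
    rw [this, sub_self]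
  have hlt : |u i - u' i| < n := by
    have := abs_sub (u i) (u' i)
    have := abs_le_of_mem_refBall hu i
    have := abs_le_of_mem_refBall hu' i
    have : (2 * ρ * r : ℤ) < n := by exact_mod_cast hn
    linarith
  exact sub_eq_zero.1 (Int.eq_zero_of_abs_lt_dvd hdvd hlt)

end Geometry

section Gibbs

variable {d ρ : ℕ} {p : ℝ≥0∞} [Fact (1 ≤ p)] {n : ℕ} {a b : ℝ}

lemma weight_pos (σ : Conf d n) : 0 < weight d ρ p n a b σ := Real.exp_pos _

variable [NeZero n]

variable (d ρ p n a b) in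
def gibbsMeasure : Measure (Conf d n) :=
  ∑ σ, ENNReal.ofReal (weight d ρ p n a b σ / partZ d ρ p n a b) • Measure.dirac σ

lemma partZ_pos : 0 < partZ d ρ p n a b :=
  Summable.of_finite.tsum_pos (fun _ => (weight_pos _).le) (fun _ => false) (weight_pos _)

lemma gibbsMeasure_apply (A : Set (Conf d n)) :
    gibbsMeasure d ρ p n a b A =
      ∑ σ, A.indicator
        (fun σ => ENNReal.ofReal (weight d ρ p n a b σ / partZ d ρ p n a b)) σ := by
  simp only [gibbsMeasure, Measure.finsetSum_apply, Measure.smul_apply, Measure.dirac_apply,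
    smul_eq_mul]
  refine Finset.sum_congr rfl fun σ _ => ?_
  by_cases h : σ ∈ A <;> simp [h]

instance : IsProbabilityMeasure (gibbsMeasure d ρ p n a b) := by
  refine ⟨?_⟩
  rw [gibbsMeasure_apply, Set.indicator_univ, ← ENNReal.ofReal_sum_of_nonneg
    (fun σ _ => div_nonneg (weight_pos _).le partZ_pos.le), ← Finset.sum_div,
    ← tsum_fintype (L := SummationFilter.unconditional _), ← partZ, div_self partZ_pos.ne',
    ENNReal.ofReal_one]

lemma prob_eq_measureReal (A : Set (Conf d n)) :
    prob d ρ p n a b A = (gibbsMeasure d ρ p n a b).real A := by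
  classical
  rw [prob, measureReal_def, gibbsMeasure_apply, tsum_subtype, tsum_fintype, Finset.sum_div,
    ENNReal.toReal_sum (fun σ _ => by by_cases h : σ ∈ A <;> simp [h])]
  refine Finset.sum_congr rfl fun σ _ => ?_
  by_cases h : σ ∈ A <;>
    simp [h, ENNReal.toReal_ofReal (div_nonneg (weight_pos σ).le partZ_pos.le)]

open Classical in
lemma prob_eq_sum_toFinset (A : Set (Conf d n)) :
    prob d ρ p n a b A = (∑ σ ∈ A.toFinset, weight d ρ p n a b σ) / partZ d ρ p n a b := by
  rw [prob, tsum_fintype, Finset.sum_set_coe]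

lemma tsum_lawOf (X : Conf d n → ℕ) (A : Set ℕ) :
    ∑' m : A, lawOf d ρ p n a b X m = prob d ρ p n a b (X ⁻¹' A) := by
  simp only [lawOf, prob_eq_measureReal, measureReal_def]
  rw [← ENNReal.tsum_toReal_eq (fun _ => measure_ne_top _ _)]
  exact congrArg ENNReal.toReal
    (tsum_measure_preimage_singleton A.to_countable fun _ _ => .of_discrete)

lemma abs_prob_sub_prob_le {E F N : Set (Conf d n)} (hE : E ⊆ F ∪ N) (hF : F ⊆ E ∪ N) :
    |prob d ρ p n a b E - prob d ρ p n a b F| ≤ prob d ρ p n a b N := by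
  simp only [prob_eq_measureReal]
  set μ := gibbsMeasure d ρ p n a b
  have hEF := (measureReal_mono hE).trans (measureReal_union_le (μ := μ) F N)
  have hFE := (measureReal_mono hF).trans (measureReal_union_le (μ := μ) E N)
  exact abs_sub_le_iff.2 ⟨by linarith, by linarith⟩

lemma dTV_lawOf_le_prob_ne (X Y : Conf d n → ℕ) :
    dTV (lawOf d ρ p n a b X) (lawOf d ρ p n a b Y) ≤
      prob d ρ p n a b {σ | X σ ≠ Y σ} := by
  refine Real.iSup_le (fun A => ?_) (by rw [prob_eq_measureReal]; exact measureReal_nonneg)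
  rw [tsum_lawOf, tsum_lawOf]
  refine abs_prob_sub_prob_le (fun σ hσ => ?_) (fun σ hσ => ?_) <;>
    by_cases h : X σ = Y σ <;> simp_all

end Gibbs

section Energy

variable {d ρ : ℕ} {p : ℝ≥0∞} [Fact (1 ≤ p)] {n : ℕ}

lemma neighborSet_torus_subset (y : Vtx d n) :
    (torus d ρ p n).neighborSet y ⊆
      ↑((Fintype.piFinset fun _ : Fin d => Finset.Icc (-(ρ : ℤ)) ρ).image (shift y)) := by
  rintro y' ⟨-, z, hz, hnorm⟩
  refine Finset.mem_image.2 ⟨z, Fintype.mem_piFinset.2 fun i => ?_, funext fun i => ?_⟩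
  · exact Finset.mem_Icc.2 (abs_le.1 (abs_le_of_lpNorm_le hnorm i))
  · simp [shift, hz i]

lemma card_neighborSet_torus_le [NeZero n] (y : Vtx d n) :
    Nat.card ((torus d ρ p n).neighborSet y) ≤ (2 * ρ + 1) ^ d := by
  classical
  rw [Nat.card_coe_set_eq]
  refine (Set.ncard_le_ncard (neighborSet_torus_subset y)).trans ?_
  rw [Set.ncard_coe_finset]
  refine Finset.card_image_le.trans_eq ?_
  simp only [Fintype.card_piFinset, Int.card_Icc, Finset.prod_const, Finset.card_univ,
    Fintype.card_fin]
  congr 1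
  omega

lemma abs_spin (s : Bool) : |spin s| = 1 := by cases s <;> simp [spin]

def edgeSpin (σ : Conf d n) : Sym2 (Vtx d n) → ℝ :=
  Sym2.lift ⟨fun x y => spin (σ x) * spin (σ y), fun _ _ => mul_comm _ _⟩

lemma abs_edgeSpin_sub_update_le (σ : Conf d n) (y : Vtx d n) (s : Bool) (e : Sym2 (Vtx d n)) :
    |edgeSpin σ e - edgeSpin (Function.update σ y s) e| ≤ if y ∈ e then 2 else 0 := by
  induction e using Sym2.ind with
  | _ x₁ x₂ =>
    split_ifs with hy
    · refine (abs_sub _ _).trans ?_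
      simp only [edgeSpin, Sym2.lift_mk, abs_mul, abs_spin]
      norm_num
    · obtain ⟨h₁, h₂⟩ : x₁ ≠ y ∧ x₂ ≠ y := by simpa [eq_comm] using hy
      simp [edgeSpin, Function.update_of_ne h₁, Function.update_of_ne h₂]

lemma abs_pairSum_sub_update_le [NeZero n] (σ : Conf d n) (y : Vtx d n) (s : Bool) :
    |pairSum d ρ p n σ - pairSum d ρ p n (Function.update σ y s)| ≤ 2 * (2 * ρ + 1) ^ d := by
  classical
  let G := torus d ρ p n
  have : Fintype G.edgeSet := Fintype.ofFinite _
  have hcard : Fintype.card {e : G.edgeSet // y ∈ (e : Sym2 (Vtx d n))}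
      = Nat.card (G.neighborSet y) := by
    rw [← Nat.card_eq_fintype_card]
    exact Nat.card_congr ((Equiv.subtypeSubtypeEquivSubtypeInter _ _).trans
      (G.incidenceSetEquivNeighborSet y))
  calc |pairSum d ρ p n σ - pairSum d ρ p n (Function.update σ y s)|
      = |∑ e : G.edgeSet, (edgeSpin σ e - edgeSpin (Function.update σ y s) e)| := by
        rw [pairSum, pairSum, tsum_fintype, tsum_fintype, Finset.sum_sub_distrib]; rfl
    _ ≤ ∑ e : G.edgeSet, if y ∈ (e : Sym2 (Vtx d n)) then (2 : ℝ) else 0 :=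
        (Finset.abs_sum_le_sum_abs _ _).trans
          (Finset.sum_le_sum fun e _ => abs_edgeSpin_sub_update_le σ y s e)
    _ = 2 * Nat.card (G.neighborSet y) := by
        rw [Finset.sum_ite, Finset.sum_const_zero, add_zero, Finset.sum_const, nsmul_eq_mul,
          ← hcard, Fintype.card_subtype, mul_comm]
    _ ≤ 2 * (2 * ρ + 1) ^ d := by
        gcongr
        exact_mod_cast card_neighborSet_torus_le y

lemma sum_spin_sub_update_false [NeZero n] (σ : Conf d n) {y : Vtx d n} (hy : σ y = true) :
    ∑' x, spin (σ x) - ∑' x, spin (Function.update σ y false x) = 2 := by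
  classical
  rw [tsum_fintype, tsum_fintype, ← Finset.add_sum_erase _ _ (Finset.mem_univ y),
    ← Function.comp_def spin (Function.update σ y false), Function.comp_update,
    Finset.sum_update_of_mem (Finset.mem_univ y), Finset.sdiff_singleton_eq_erase, hy]
  norm_num [spin]

variable (d ρ) in
def flipFactor (a b : ℝ) : ℝ := Real.exp (2 * a + 2 * |b| * (2 * ρ + 1) ^ d)

lemma weight_le_flipFactor_mul_weight_update [NeZero n] {a b : ℝ} (σ : Conf d n)
    {y : Vtx d n} (hy : σ y = true) :
    weight d ρ p n a b σ ≤
      flipFactor d ρ a b * weight d ρ p n a b (Function.update σ y false) := by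
  rw [weight, weight, flipFactor, ← Real.exp_add, Real.exp_le_exp, hamiltonian, hamiltonian]
  have hspin := sum_spin_sub_update_false σ hy
  have hpair := (le_abs_self _).trans ((abs_mul b _).trans_le
    (mul_le_mul_of_nonneg_left (abs_pairSum_sub_update_le (ρ := ρ) (p := p) σ y false)
      (abs_nonneg b)))
  linear_combination a * hspin + hpair

end Energy

section Flip

variable {d ρ : ℕ} {p : ℝ≥0∞} [Fact (1 ≤ p)] {n : ℕ} [NeZero n] {a b : ℝ}

lemma weight_le_flipFactor_pow_mul_weight_piecewise (T : Finset (Vtx d n)) (σ : Conf d n)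
    (hT : ∀ y ∈ T, σ y = true) :
    weight d ρ p n a b σ ≤
      flipFactor d ρ a b ^ T.card * weight d ρ p n a b (T.piecewise (fun _ => false) σ) := by
  induction T using Finset.induction_on with
  | empty => simp
  | @insert y T hyT ih =>
    have hy : T.piecewise (fun _ => false) σ y = true := by
      rw [Finset.piecewise_eq_of_notMem _ _ _ hyT]; exact hT y (Finset.mem_insert_self y T)
    calc weight d ρ p n a b σ
        ≤ flipFactor d ρ a b ^ T.card * weight d ρ p n a b (T.piecewise (fun _ => false) σ) :=
          ih fun z hz => hT z (Finset.mem_insert_of_mem hz)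
      _ ≤ flipFactor d ρ a b ^ T.card * (flipFactor d ρ a b *
            weight d ρ p n a b (Function.update (T.piecewise (fun _ => false) σ) y false)) :=
          mul_le_mul_of_nonneg_left (weight_le_flipFactor_mul_weight_update _ hy)
            (pow_nonneg (Real.exp_pos _).le _)
      _ = _ := by
          rw [Finset.piecewise_insert, Finset.card_insert_of_notMem hyT, pow_succ, mul_assoc]

lemma prob_le_flipFactor_pow (T : Finset (Vtx d n)) {A : Set (Conf d n)}
    (hA : ∀ σ ∈ A, ∀ y ∈ T, σ y = true) :
    prob d ρ p n a b A ≤ flipFactor d ρ a b ^ T.card := by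
  classical
  set Φ : Conf d n → Conf d n := fun σ => T.piecewise (fun _ => false) σ
  have hΦ : Set.InjOn Φ ↑A.toFinset := by
    intro σ hσ σ' hσ' h
    funext y
    by_cases hy : y ∈ T
    · rw [hA σ (by simpa using hσ) y hy, hA σ' (by simpa using hσ') y hy]
    · simpa [Φ, Finset.piecewise_eq_of_notMem _ _ _ hy] using congrFun h y
  have hZ : 0 < partZ d ρ p n a b := partZ_pos
  rw [prob_eq_sum_toFinset, div_le_iff₀ hZ]
  calc ∑ σ ∈ A.toFinset, weight d ρ p n a b σ
      ≤ ∑ σ ∈ A.toFinset, flipFactor d ρ a b ^ T.card * weight d ρ p n a b (Φ σ) :=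
        Finset.sum_le_sum fun σ hσ =>
          weight_le_flipFactor_pow_mul_weight_piecewise T σ (hA σ (by simpa using hσ))
    _ = flipFactor d ρ a b ^ T.card * ∑ τ ∈ A.toFinset.image Φ, weight d ρ p n a b τ := by
        rw [Finset.sum_image hΦ, Finset.mul_sum]
    _ ≤ flipFactor d ρ a b ^ T.card * partZ d ρ p n a b := by
        refine mul_le_mul_of_nonneg_left ?_ (pow_nonneg (Real.exp_pos _).le _)
        exact (Finset.sum_le_sum_of_subset_of_nonneg (Finset.subset_univ _)
          fun τ _ _ => (weight_pos τ).le).trans_eq (tsum_fintype _).symm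

end Flip

section Occurrences

variable {d ρ : ℕ} {p : ℝ≥0∞} [Fact (1 ≤ p)] {r n : ℕ}

variable (d ρ p r) in
def annulus : Finset (Fin d → ℤ) :=
  (refBall_finite d ρ p (r + 1)).toFinset \ (refBall_finite d ρ p r).toFinset

lemma mem_annulus {v : Fin d → ℤ} :
    v ∈ annulus d ρ p r ↔ v ∈ refBall d ρ p (r + 1) ∧ v ∉ refBall d ρ p r := by
  simp [annulus]

lemma ringExt_apply_of_mem (η : LocalConfig d ρ p r) (v : refBall d ρ p (r + 1))
    (hv : v.1 ∈ refBall d ρ p r) : ringExt d ρ p r η v = η ⟨v.1, hv⟩ :=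
  dif_pos hv

lemma ringExt_apply_of_notMem (η : LocalConfig d ρ p r) (v : refBall d ρ p (r + 1))
    (hv : v.1 ∉ refBall d ρ p r) : ringExt d ρ p r η v = false :=
  dif_neg hv

lemma occursAt_of_occursAt_ringExt {η : LocalConfig d ρ p r} {x : Vtx d n} {σ : Conf d n}
    (h : occursAt d ρ p (r + 1) n (ringExt d ρ p r η) x σ) : occursAt d ρ p r n η x σ :=
  fun v => (h ⟨v.1, refBall_subset_refBall_succ r v.2⟩).trans (ringExt_apply_of_mem η _ v.2)

lemma exists_mem_annulus_of_not_occursAt_ringExt {η : LocalConfig d ρ p r} {x : Vtx d n}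
    {σ : Conf d n} (h : occursAt d ρ p r n η x σ)
    (h' : ¬ occursAt d ρ p (r + 1) n (ringExt d ρ p r η) x σ) :
    ∃ v ∈ annulus d ρ p r, σ (shift x v) = true := by
  obtain ⟨v, hv⟩ := not_forall.1 h'
  by_cases hvr : v.1 ∈ refBall d ρ p r
  · exact absurd ((h ⟨v.1, hvr⟩).trans (ringExt_apply_of_mem η v hvr).symm) hv
  · rw [ringExt_apply_of_notMem η v hvr, Bool.not_eq_false] at hv
    exact ⟨v.1, mem_annulus.2 ⟨v.2, hvr⟩, hv⟩

lemma Xcount_ringExt_ne_subset [NeZero n] (η : LocalConfig d ρ p r) :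
    {σ : Conf d n |
        Xcount d ρ p (r + 1) n (ringExt d ρ p r η) σ ≠ Xcount d ρ p r n η σ} ⊆
      ⋃ q ∈ (Finset.univ ×ˢ annulus d ρ p r),
        {σ | occursAt d ρ p r n η q.1 σ ∧ σ (shift q.1 q.2) = true} := by
  intro σ hσ
  by_contra hcov
  refine hσ (congrArg Set.ncard (Set.Subset.antisymm
    (fun x hx => occursAt_of_occursAt_ringExt hx) fun x hx => ?_))
  by_contra hx'
  obtain ⟨v, hv, hσv⟩ := exists_mem_annulus_of_not_occursAt_ringExt hx hx'
  exact hcov (Set.mem_biUnion (x := (x, v)) (by simp [hv]) ⟨hx, hσv⟩)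

variable [NeZero n] {a b : ℝ}

lemma prob_occursAt_and_shift_eq_true_le (η : LocalConfig d ρ p r) (hn : 2 * ρ * (r + 1) < n)
    (x : Vtx d n) {v : Fin d → ℤ} (hv : v ∈ annulus d ρ p r) :
    prob d ρ p n a b {σ | occursAt d ρ p r n η x σ ∧ σ (shift x v) = true} ≤
      flipFactor d ρ a b ^ (kOf d ρ p r η + 1) := by
  classical
  obtain ⟨hv₁, hv₀⟩ := mem_annulus.1 hv
  have := (refBall_finite d ρ p r).to_subtype
  set P := (Set.toFinite {u | η u = true}).toFinset
  have hinj := shift_injOn_refBall (p := p) hn x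
  have hP : (P.image fun u => shift x u.1).card = kOf d ρ p r η := by
    rw [Finset.card_image_of_injOn fun u _ u' _ h =>
      Subtype.ext (hinj (refBall_subset_refBall_succ r u.2) (refBall_subset_refBall_succ r u'.2) h),
      kOf, Set.ncard_eq_toFinset_card _ (Set.toFinite _)]
  have hvP : shift x v ∉ P.image fun u => shift x u.1 := by
    rintro hmem
    obtain ⟨u, -, hu⟩ := Finset.mem_image.1 hmem
    exact hv₀ (hinj (refBall_subset_refBall_succ r u.2) hv₁ hu ▸ u.2)
  refine (prob_le_flipFactor_pow (insert (shift x v) (P.image fun u => shift x u.1))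
    fun σ hσ y hy => ?_).trans_eq (by rw [Finset.card_insert_of_notMem hvP, hP])
  obtain rfl | hy := Finset.mem_insert.1 hy
  · exact hσ.2
  · obtain ⟨u, hu, rfl⟩ := Finset.mem_image.1 hy
    exact (hσ.1 u).trans (by simpa [P] using hu)

lemma prob_Xcount_ringExt_ne_le (η : LocalConfig d ρ p r) (hn : 2 * ρ * (r + 1) < n) :
    prob d ρ p n a b
        {σ | Xcount d ρ p (r + 1) n (ringExt d ρ p r η) σ ≠ Xcount d ρ p r n η σ} ≤
      n ^ d * (annulus d ρ p r).card * flipFactor d ρ a b ^ (kOf d ρ p r η + 1) := by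
  rw [prob_eq_measureReal]
  refine (measureReal_mono (Xcount_ringExt_ne_subset η) (measure_ne_top _ _)).trans
    ((measureReal_biUnion_finset_le _ _).trans ?_)
  refine (Finset.sum_le_card_nsmul _ _ _ fun q hq =>
    (prob_eq_measureReal (p := p) _).symm.trans_le
      (prob_occursAt_and_shift_eq_true_le η hn q.1 (Finset.mem_product.1 hq).2)).trans_eq ?_
  simp [Finset.card_product, ZMod.card]

end Occurrences

lemma pow_mul_rpow_neg_div_pow_succ {x : ℝ} (hx : 0 < x) (d : ℕ) {k : ℕ} (hk : k ≠ 0) :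
    x ^ d * (x ^ (-(d : ℝ) / k)) ^ (k + 1) = x ^ (-(d : ℝ) / k) := by
  rw [← Real.rpow_natCast, ← Real.rpow_natCast _ (k + 1), ← Real.rpow_mul hx.le,
    ← Real.rpow_add hx]
  congr 1
  field_simp
  push_cast
  ring

theorem stmt_4_general
    (d ρ r : ℕ) (p : ℝ≥0∞) [Fact (1 ≤ p)]
    (η : LocalConfig d ρ p r) (hk : 1 ≤ kOf d ρ p r η)
    (c : ℝ) (hc : 0 < c) (b : ℝ) (a : ℕ → ℝ)
    (ha : ∀ n : ℕ, 0 < n →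
      Real.exp (2 * a n) = c * (n : ℝ) ^ (-(d : ℝ) / (kOf d ρ p r η : ℝ))) :
    ∃ C : ℝ, 0 < C ∧ ∀ n : ℕ, 2 * ρ * (r + 2) < n →
      dTV (lawOf d ρ p n (a n) b (Xcount d ρ p (r + 1) n (ringExt d ρ p r η)))
          (lawOf d ρ p n (a n) b (Xcount d ρ p r n η))
        ≤ C * (n : ℝ) ^ (-(d : ℝ) / (kOf d ρ p r η : ℝ)) := by
  set k := kOf d ρ p r η
  set E := Real.exp (2 * |b| * (2 * ρ + 1) ^ d)
  set C₀ := (annulus d ρ p r).card * (c * E) ^ (k + 1) with hC₀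
  refine ⟨C₀ + 1, by positivity, fun n hn => ?_⟩
  have hn₀ : 0 < n := (Nat.zero_le _).trans_lt hn
  have : NeZero n := ⟨hn₀.ne'⟩
  have hflip : flipFactor d ρ (a n) b = c * (n : ℝ) ^ (-(d : ℝ) / k) * E := by
    rw [flipFactor, Real.exp_add, ha n hn₀]
  have hpow := pow_mul_rpow_neg_div_pow_succ (Nat.cast_pos.2 hn₀) d (by omega : k ≠ 0)
  calc _ ≤ prob d ρ p n (a n) b
          {σ | Xcount d ρ p (r + 1) n (ringExt d ρ p r η) σ ≠ Xcount d ρ p r n η σ} :=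
        dTV_lawOf_le_prob_ne _ _
    _ ≤ n ^ d * (annulus d ρ p r).card * flipFactor d ρ (a n) b ^ (k + 1) :=
        prob_Xcount_ringExt_ne_le η (lt_of_le_of_lt (by gcongr; omega) hn)
    _ = C₀ * (n : ℝ) ^ (-(d : ℝ) / k) := by
        rw [hflip, hC₀]
        linear_combination ((annulus d ρ p r).card * (c * E) ^ (k + 1) : ℝ) * hpow
    _ ≤ (C₀ + 1) * (n : ℝ) ^ (-(d : ℝ) / k) := by gcongr; linarith

/-- **Lemma (reduction to clean configurations, total variation part).**
If `e^{2a(n)} = c n^{-d/k(η)}` then `d_TV(L(X_n(η̊)), L(X_n(η))) = O(n^{-d/k(η)})`. -/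
theorem stmt_4
    (d ρ r : ℕ) (hd : 1 ≤ d) (hρ : 1 ≤ ρ) (p : ℝ≥0∞) [Fact (1 ≤ p)]
    (η : LocalConfig d ρ p r) (hk : 1 ≤ kOf d ρ p r η)
    (c : ℝ) (hc : 0 < c) (b : ℝ) (a : ℕ → ℝ)
    (ha : ∀ n : ℕ, 0 < n →
      Real.exp (2 * a n) = c * (n : ℝ) ^ (-(d : ℝ) / (kOf d ρ p r η : ℝ))) :
    ∃ C : ℝ, 0 < C ∧ ∀ n : ℕ, 2 * ρ * (r + 2) < n →
      dTV (lawOf d ρ p n (a n) b (Xcount d ρ p (r + 1) n (ringExt d ρ p r η)))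
          (lawOf d ρ p n (a n) b (Xcount d ρ p r n η))
        ≤ C * (n : ℝ) ^ (-(d : ℝ) / (kOf d ρ p r η : ℝ)) :=
  stmt_4_general d ρ r p η hk c hc b a ha

end

end Ising
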